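/- arXiv:1705.05491 — 3 statements merged into one kernel-verified Lean document; each statement's English description precedes it below -/
import Mathlib

section
/- Let z_1, …, z_n be points in a Hilbert space and let γ > 0. Let z_* be a (1+γ)-approximate geometric median, i.e. ∑_{i=1}^n ‖z_* − z_i‖ ≤ (1+γ) · min_z ∑_{i=1}^n ‖z − z_i‖. For any α ∈ (0, 1/2) and any r ∈ ℝ, if at least (1−α)n of the points satisfy ‖z_i‖ ≤ r, then ‖z_*‖ ≤ C_α r + γ · (min_z ∑_{i=1}^n ‖z − z_i‖)/((1−2α)n) ≤ C_α r + γ · max_{1≤i≤n} ‖z_i‖/(1−2α), where C_α = 2(1−α)/(1−2α). -/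
/-!
Compare the objective `f y = ∑ ‖y - zᵢ‖` at `z⋆` with its value at the origin. Each of the at
least `(1-α) n` points with `‖zᵢ‖ ≤ r` contributes at least `‖z⋆‖ - 2r` to `f z⋆ - f 0`, each
other point at least `-‖z⋆‖`, while `f z⋆ - f 0 ≤ γ ⬝ min f` because `min f ≤ f 0`. Solving for
`‖z⋆‖` gives the first bound; the second is `min f ≤ f 0 ≤ n ⬝ max ‖zᵢ‖`.
-/

open Finset

section SumDist

variable {E ι : Type*} [SeminormedAddCommGroup E] [Fintype ι] (z : ι → E)

lemma iInf_sum_norm_sub_nonneg : 0 ≤ ⨅ y : E, ∑ i, ‖y - z i‖ :=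
  Real.iInf_nonneg fun _ => by positivity

lemma iInf_sum_norm_sub_le_sum_norm : ⨅ y : E, ∑ i, ‖y - z i‖ ≤ ∑ i, ‖z i‖ := by
  simpa using ciInf_le (f := fun y : E => ∑ i, ‖y - z i‖) ⟨0, by rintro _ ⟨y, rfl⟩; positivity⟩ 0

lemma sum_norm_le_card_mul_iSup : ∑ i, ‖z i‖ ≤ Fintype.card ι * ⨆ i, ‖z i‖ := by
  simpa using sum_le_sum fun i (_ : i ∈ univ) =>
    le_ciSup (Set.finite_range fun j => ‖z j‖).bddAbove i

lemma sum_norm_add_le_sum_norm_sub [DecidableEq ι] (w : E) {S : Finset ι} {r : ℝ}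
    (hS : ∀ i ∈ S, ‖z i‖ ≤ r) :
    ∑ i, ‖z i‖ + (2 * #S - Fintype.card ι) * (‖w‖ - r) - Fintype.card ι * r
      ≤ ∑ i, ‖w - z i‖ := by
  have hin : ∑ i ∈ S, (‖w‖ - 2 * r) ≤ ∑ i ∈ S, (‖w - z i‖ - ‖z i‖) :=
    sum_le_sum fun i hi => by linarith [hS i hi, norm_sub_norm_le w (z i)]
  have hout : ∑ i ∈ Sᶜ, (-‖w‖) ≤ ∑ i ∈ Sᶜ, (‖w - z i‖ - ‖z i‖) :=
    sum_le_sum fun i _ => by linarith [norm_le_norm_add_norm_sub' (z i) w, norm_sub_rev w (z i)]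
  have hcard : (#Sᶜ : ℝ) = Fintype.card ι - #S := by
    rw [card_compl, Nat.cast_sub S.card_le_univ]
  rw [sum_const, nsmul_eq_mul] at hin
  rw [sum_const, nsmul_eq_mul, hcard] at hout
  have hsplit : ∑ i ∈ S, (‖w - z i‖ - ‖z i‖) + ∑ i ∈ Sᶜ, (‖w - z i‖ - ‖z i‖)
      = ∑ i, ‖w - z i‖ - ∑ i, ‖z i‖ := by
    rw [sum_add_sum_compl, sum_sub_distrib]
  linarith

end SumDist

lemma le_robust_bound_of_majority {n k α r B c : ℝ} (hn : 0 < n) (hα : α < 1 / 2)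
    (hk : (1 - α) * n ≤ k) (hr : 0 ≤ r) (hc : 0 ≤ c)
    (h : (2 * k - n) * (B - r) - n * r ≤ c) :
    B ≤ 2 * (1 - α) / (1 - 2 * α) * r + c / ((1 - 2 * α) * n) := by
  have h2α : 0 < 1 - 2 * α := by linarith
  have key : (1 - 2 * α) * n * B ≤ 2 * (1 - α) * n * r + c := by
    rcases le_total B r with hBr | hrB
    · nlinarith [mul_pos h2α hn]
    · nlinarith [mul_le_mul_of_nonneg_right (show (1 - 2 * α) * n ≤ 2 * k - n by linarith)
        (sub_nonneg.2 hrB)]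
  rw [div_mul_eq_mul_div, div_add_div _ _ h2α.ne' (by positivity), le_div_iff₀ (by positivity)]
  nlinarith [mul_pos h2α hn]

theorem geometric_median_robust_general
    {H : Type*} [NormedAddCommGroup H]
    (n : ℕ) (hn : 0 < n) (z : Fin n → H) (γ : ℝ) (hγ : 0 < γ)
    (zstar : H)
    (happrox : ∑ i, ‖zstar - z i‖ ≤ (1 + γ) * ⨅ y : H, ∑ i, ‖y - z i‖)
    (α : ℝ) (hα : α ∈ Set.Ioo (0 : ℝ) (1/2)) (r : ℝ)
    (hmaj : (1 - α) * n ≤ ({i | ‖z i‖ ≤ r} : Finset (Fin n)).card) :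
    ‖zstar‖ ≤ (2 * (1 - α) / (1 - 2 * α)) * r
        + γ * (⨅ y : H, ∑ i, ‖y - z i‖) / ((1 - 2 * α) * n)
      ∧ (2 * (1 - α) / (1 - 2 * α)) * r
          + γ * (⨅ y : H, ∑ i, ‖y - z i‖) / ((1 - 2 * α) * n)
        ≤ (2 * (1 - α) / (1 - 2 * α)) * r
          + γ * (⨆ i, ‖z i‖) / (1 - 2 * α) := by
  obtain ⟨-, hα⟩ := hα
  have hn' : (0 : ℝ) < n := Nat.cast_pos.2 hn
  set M := ⨅ y : H, ∑ i, ‖y - z i‖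
  set S : Finset (Fin n) := {i | ‖z i‖ ≤ r}
  have hM0 : 0 ≤ M := iInf_sum_norm_sub_nonneg z
  have hM : M ≤ ∑ i, ‖z i‖ := iInf_sum_norm_sub_le_sum_norm z
  have hr : 0 ≤ r := by
    obtain ⟨i, hi⟩ := card_pos.1 (Nat.cast_pos.1 (hmaj.trans_lt' (by nlinarith)) : 0 < #S)
    exact (norm_nonneg _).trans (mem_filter.1 hi).2
  have hgap := sum_norm_add_le_sum_norm_sub z zstar (S := S) fun i hi => (mem_filter.1 hi).2
  rw [Fintype.card_fin] at hgap
  refine ⟨le_robust_bound_of_majority hn' hα hmaj hr (by positivity) (by linarith), ?_⟩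
  have hMsup : M ≤ n * ⨆ i, ‖z i‖ := by simpa using hM.trans (sum_norm_le_card_mul_iSup z)
  refine add_le_add_right ?_ _
  calc γ * M / ((1 - 2 * α) * n) ≤ γ * (n * ⨆ i, ‖z i‖) / ((1 - 2 * α) * n) := by
        gcongr; nlinarith
    _ = γ * (⨆ i, ‖z i‖) / (1 - 2 * α) := by field_simp

/-- Lemma 2.1 (robustness of approximate geometric medians): if `z⋆` is a
`(1+γ)`-approximate geometric median of `z 1, …, z n` in a Hilbert space, and at
least `(1-α) n` of the points have norm at most `r`, then
`‖z⋆‖ ≤ C_α r + γ ⬝ (min_z ∑ ‖z - zᵢ‖)/((1-2α) n) ≤ C_α r + γ ⬝ max ‖zᵢ‖/(1-2α)`,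
where `C_α = 2(1-α)/(1-2α)`. -/
theorem geometric_median_robust
    {H : Type*} [NormedAddCommGroup H] [InnerProductSpace ℝ H] [CompleteSpace H]
    (n : ℕ) (hn : 0 < n) (z : Fin n → H) (γ : ℝ) (hγ : 0 < γ)
    (zstar : H)
    (happrox : ∑ i, ‖zstar - z i‖ ≤ (1 + γ) * ⨅ y : H, ∑ i, ‖y - z i‖)
    (α : ℝ) (hα : α ∈ Set.Ioo (0 : ℝ) (1/2)) (r : ℝ)
    (hmaj : (1 - α) * n ≤ ({i | ‖z i‖ ≤ r} : Finset (Fin n)).card) :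
    ‖zstar‖ ≤ (2 * (1 - α) / (1 - 2 * α)) * r
        + γ * (⨅ y : H, ∑ i, ‖y - z i‖) / ((1 - 2 * α) * n)
      ∧ (2 * (1 - α) / (1 - 2 * α)) * r
          + γ * (⨅ y : H, ∑ i, ‖y - z i‖) / ((1 - 2 * α) * n)
        ≤ (2 * (1 - α) / (1 - 2 * α)) * r
          + γ * (⨆ i, ‖z i‖) / (1 - 2 * α) :=
  geometric_median_robust_general n hn z γ hγ zstar happrox α hα r hmaj
end

section
/- Let F : Θ → ℝ be L-strongly convex and differentiable with M-Lipschitz gradient, minimized at θ* with ∇F(θ*) = 0. Suppose for each t ≥ 1 there is a function G_t : Θ → ℝ^d satisfying the uniform deviation bound ‖G_t(θ) − ∇F(θ)‖ ≤ ξ₁ + ξ₂‖θ − θ*‖ for all θ ∈ Θ, where ξ₁, ξ₂ ≥ 0 do not depend on t. Define iterates θ_t = θ_{t−1} − η G_t(θ_{t−1}) with η = L/(2M²). If ρ := 1 − √(1 − L²/(4M²)) − ξ₂L/(2M²) > 0, then for all t ≥ 1: ‖θ_t − θ*‖ ≤ (1 − ρ)^t ‖θ_0 − θ*‖ + ηξ₁/ρ.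 -/
/-!
Strong convexity together with `∇F(θ*) = 0` gives `L‖θ - θ*‖² ≤ ⟪∇F θ, θ - θ*⟫`, and the Lipschitz
bound gives `‖∇F θ‖ ≤ M‖θ - θ*‖`; expanding the square, an exact gradient step with
`η = L/(2M²)` contracts the distance to `θ*` by `√(1 - L²/(4M²))`. Replacing `∇F` by `G t` costs at
most `η(ξ₁ + ξ₂‖θ - θ*‖)`, so `‖θ_t - θ*‖ ≤ (1 - ρ)‖θ_{t-1} - θ*‖ + ηξ₁`, and unrolling this
recursion gives the bound.
-/

open RealInnerProductSpace

section InnerProductSpace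

variable {E : Type*} [NormedAddCommGroup E] [InnerProductSpace ℝ E]

theorem mul_norm_sub_sq_le_inner_sub_of_strongConvex {s : Set E} {F : E → ℝ} {g : E → E} {L : ℝ}
    (hF : ∀ x ∈ s, ∀ y ∈ s, F x + ⟪g x, y - x⟫ + L / 2 * ‖y - x‖ ^ 2 ≤ F y)
    {x y : E} (hx : x ∈ s) (hy : y ∈ s) :
    L * ‖x - y‖ ^ 2 ≤ ⟪g x - g y, x - y⟫ := by
  have hxy := hF x hx y hy
  have hyx := hF y hy x hx
  rw [norm_sub_rev y x, ← neg_sub x y, inner_neg_right] at hxy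
  rw [inner_sub_left]
  linarith

theorem norm_sub_smul_sq_le {u v : E} {η L M : ℝ} (hη : 0 ≤ η)
    (hinner : L * ‖u‖ ^ 2 ≤ ⟪v, u⟫) (hnorm : ‖v‖ ≤ M * ‖u‖) :
    ‖u - η • v‖ ^ 2 ≤ (1 - 2 * η * L + η ^ 2 * M ^ 2) * ‖u‖ ^ 2 := by
  have hnorm_sq : ‖v‖ ^ 2 ≤ (M * ‖u‖) ^ 2 := pow_le_pow_left₀ (norm_nonneg v) hnorm 2
  rw [norm_sub_sq_real, real_inner_smul_right, real_inner_comm, norm_smul, Real.norm_eq_abs,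
    abs_of_nonneg hη]
  nlinarith [mul_le_mul_of_nonneg_left hinner hη, mul_le_mul_of_nonneg_left hnorm_sq (sq_nonneg η)]

theorem norm_sub_smul_le_sqrt_mul {u v : E} {L M : ℝ} (hL : 0 ≤ L) (hM : M ≠ 0)
    (hinner : L * ‖u‖ ^ 2 ≤ ⟪v, u⟫) (hnorm : ‖v‖ ≤ M * ‖u‖) :
    ‖u - (L / (2 * M ^ 2)) • v‖ ≤ √(1 - L ^ 2 / (4 * M ^ 2)) * ‖u‖ := by
  have hsq := norm_sub_smul_sq_le (η := L / (2 * M ^ 2)) (by positivity) hinner hnorm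
  have hfactor : 1 - 2 * (L / (2 * M ^ 2)) * L + (L / (2 * M ^ 2)) ^ 2 * M ^ 2
      = 1 - L ^ 2 / (4 * M ^ 2) - L ^ 2 / (2 * M ^ 2) := by
    field_simp
    ring
  have hcoeff : 1 - 2 * (L / (2 * M ^ 2)) * L + (L / (2 * M ^ 2)) ^ 2 * M ^ 2
      ≤ 1 - L ^ 2 / (4 * M ^ 2) := by
    rw [hfactor]
    linarith [show 0 ≤ L ^ 2 / (2 * M ^ 2) by positivity]
  calc ‖u - (L / (2 * M ^ 2)) • v‖
      = √(‖u - (L / (2 * M ^ 2)) • v‖ ^ 2) := (Real.sqrt_sq (norm_nonneg _)).symm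
    _ ≤ √((1 - L ^ 2 / (4 * M ^ 2)) * ‖u‖ ^ 2) :=
      Real.sqrt_le_sqrt (hsq.trans (by gcongr))
    _ = √(1 - L ^ 2 / (4 * M ^ 2)) * ‖u‖ := by
      rw [Real.sqrt_mul' _ (sq_nonneg _), Real.sqrt_sq (norm_nonneg _)]

theorem norm_gradient_step_sub_le {s : Set E} {F : E → ℝ} {g : E → E} {L M : ℝ}
    (hL : 0 ≤ L) (hM : M ≠ 0)
    (hF : ∀ x ∈ s, ∀ y ∈ s, F x + ⟪g x, y - x⟫ + L / 2 * ‖y - x‖ ^ 2 ≤ F y)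
    (hg : ∀ x ∈ s, ∀ y ∈ s, ‖g x - g y‖ ≤ M * ‖x - y‖)
    {xstar : E} (hxstar : xstar ∈ s) (hg0 : g xstar = 0) {x : E} (hx : x ∈ s) :
    ‖x - (L / (2 * M ^ 2)) • g x - xstar‖ ≤ √(1 - L ^ 2 / (4 * M ^ 2)) * ‖x - xstar‖ := by
  have hinner := mul_norm_sub_sq_le_inner_sub_of_strongConvex hF hx hxstar
  have hnorm := hg x hx xstar hxstar
  rw [hg0, sub_zero] at hinner hnorm
  rw [sub_right_comm]
  exact norm_sub_smul_le_sqrt_mul hL hM hinner hnorm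

theorem norm_sub_smul_sub_le (x y a b : E) {η : ℝ} (hη : 0 ≤ η) :
    ‖x - η • a - y‖ ≤ ‖x - η • b - y‖ + η * ‖a - b‖ := by
  calc ‖x - η • a - y‖ ≤ ‖x - η • a - (x - η • b)‖ + ‖x - η • b - y‖ :=
        norm_sub_le_norm_sub_add_norm_sub _ _ _
    _ = ‖x - η • b - y‖ + η * ‖a - b‖ := by
      rw [sub_sub_sub_cancel_left, ← smul_sub, norm_smul, Real.norm_eq_abs, abs_of_nonneg hη,
        norm_sub_rev, add_comm]

end InnerProductSpace

theorem le_pow_mul_add_div_of_le_mul_add {a : ℕ → ℝ} {ρ c : ℝ} (hρ : 0 < ρ) (hρ1 : ρ ≤ 1)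
    (hc : 0 ≤ c) (h : ∀ n, a (n + 1) ≤ (1 - ρ) * a n + c) (n : ℕ) :
    a n ≤ (1 - ρ) ^ n * a 0 + c / ρ := by
  induction n with
  | zero =>
    simp only [pow_zero, one_mul, le_add_iff_nonneg_right]
    positivity
  | succ n ih =>
    calc a (n + 1) ≤ (1 - ρ) * a n + c := h n
      _ ≤ (1 - ρ) * ((1 - ρ) ^ n * a 0 + c / ρ) + c := by gcongr
      _ = (1 - ρ) ^ (n + 1) * a 0 + c / ρ := by field_simp; ring

theorem approximate_gradient_descent_convergence_general
    (d : ℕ) (Θ : Set (EuclideanSpace ℝ (Fin d)))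
    (F : EuclideanSpace ℝ (Fin d) → ℝ)
    (gF : EuclideanSpace ℝ (Fin d) → EuclideanSpace ℝ (Fin d))
    (L M : ℝ) (hL : 0 < L) (hM : 0 < M)
    (hstrong : ∀ θ ∈ Θ, ∀ θ' ∈ Θ,
      F θ + inner ℝ (gF θ) (θ' - θ) + L / 2 * ‖θ' - θ‖ ^ 2 ≤ F θ')
    (hlip : ∀ θ ∈ Θ, ∀ θ' ∈ Θ, ‖gF θ - gF θ'‖ ≤ M * ‖θ - θ'‖)
    (θstar : EuclideanSpace ℝ (Fin d)) (hθstar : θstar ∈ Θ)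
    (hgrad0 : gF θstar = 0)
    (ξ₁ ξ₂ : ℝ) (hξ₁ : 0 ≤ ξ₁) (hξ₂ : 0 ≤ ξ₂)
    (G : ℕ → EuclideanSpace ℝ (Fin d) → EuclideanSpace ℝ (Fin d))
    (hdev : ∀ t : ℕ, 1 ≤ t → ∀ θ ∈ Θ, ‖G t θ - gF θ‖ ≤ ξ₁ + ξ₂ * ‖θ - θstar‖)
    (η : ℝ) (hη : η = L / (2 * M ^ 2))
    (θseq : ℕ → EuclideanSpace ℝ (Fin d))
    (hmem : ∀ t : ℕ, θseq t ∈ Θ)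
    (hiter : ∀ t : ℕ, 1 ≤ t → θseq t = θseq (t - 1) - η • G t (θseq (t - 1)))
    (ρ : ℝ)
    (hρdef : ρ = 1 - Real.sqrt (1 - L ^ 2 / (4 * M ^ 2)) - ξ₂ * L / (2 * M ^ 2))
    (hρpos : 0 < ρ) :
    ∀ t : ℕ, 1 ≤ t →
      ‖θseq t - θstar‖ ≤ (1 - ρ) ^ t * ‖θseq 0 - θstar‖ + η * ξ₁ / ρ := by
  have hη0 : 0 ≤ η := hη ▸ by positivity
  have hρ1 : 1 - ρ = √(1 - L ^ 2 / (4 * M ^ 2)) + η * ξ₂ := by rw [hρdef, hη]; ring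
  have hstep : ∀ n, ‖θseq (n + 1) - θstar‖ ≤ (1 - ρ) * ‖θseq n - θstar‖ + η * ξ₁ := by
    intro n
    rw [hiter (n + 1) (by omega), Nat.add_sub_cancel]
    have hexact := norm_gradient_step_sub_le hL.le hM.ne' hstrong hlip hθstar hgrad0 (hmem n)
    calc ‖θseq n - η • G (n + 1) (θseq n) - θstar‖
        ≤ ‖θseq n - η • gF (θseq n) - θstar‖ + η * ‖G (n + 1) (θseq n) - gF (θseq n)‖ :=
          norm_sub_smul_sub_le _ _ _ _ hη0
      _ ≤ √(1 - L ^ 2 / (4 * M ^ 2)) * ‖θseq n - θstar‖ + η * (ξ₁ + ξ₂ * ‖θseq n - θstar‖) := by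
          gcongr
          · exact hη ▸ hexact
          · exact hdev (n + 1) (by omega) _ (hmem n)
      _ = (1 - ρ) * ‖θseq n - θstar‖ + η * ξ₁ := by rw [hρ1]; ring
  have hρle : ρ ≤ 1 := by
    linarith [Real.sqrt_nonneg (1 - L ^ 2 / (4 * M ^ 2)), mul_nonneg hη0 hξ₂]
  exact fun t _ =>
    le_pow_mul_add_div_of_le_mul_add (a := fun n => ‖θseq n - θstar‖) hρpos hρle
      (by positivity) hstep t

/-- Lemma 3.3: convergence of approximate gradient descent. If each approximate
gradient function `G t` satisfies the uniform deviation bound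
`‖G t θ - ∇F θ‖ ≤ ξ₁ + ξ₂ ‖θ - θ*‖` on `Θ`, and
`ρ = 1 - √(1 - L²/(4M²)) - ξ₂ L/(2M²) > 0`, then the iterates
`θ_t = θ_{t-1} - η G t (θ_{t-1})` with `η = L/(2M²)` satisfy
`‖θ_t - θ*‖ ≤ (1-ρ)^t ‖θ_0 - θ*‖ + η ξ₁ / ρ`. -/
theorem approximate_gradient_descent_convergence
    (d : ℕ) (Θ : Set (EuclideanSpace ℝ (Fin d)))
    (F : EuclideanSpace ℝ (Fin d) → ℝ)
    (gF : EuclideanSpace ℝ (Fin d) → EuclideanSpace ℝ (Fin d))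
    (L M : ℝ) (hL : 0 < L) (hM : 0 < M)
    (hdiff : ∀ θ ∈ Θ, HasGradientAt F (gF θ) θ)
    (hstrong : ∀ θ ∈ Θ, ∀ θ' ∈ Θ,
      F θ + inner ℝ (gF θ) (θ' - θ) + L / 2 * ‖θ' - θ‖ ^ 2 ≤ F θ')
    (hlip : ∀ θ ∈ Θ, ∀ θ' ∈ Θ, ‖gF θ - gF θ'‖ ≤ M * ‖θ - θ'‖)
    (θstar : EuclideanSpace ℝ (Fin d)) (hθstar : θstar ∈ Θ)
    (hgrad0 : gF θstar = 0)
    (ξ₁ ξ₂ : ℝ) (hξ₁ : 0 ≤ ξ₁) (hξ₂ : 0 ≤ ξ₂)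
    (G : ℕ → EuclideanSpace ℝ (Fin d) → EuclideanSpace ℝ (Fin d))
    (hdev : ∀ t : ℕ, 1 ≤ t → ∀ θ ∈ Θ, ‖G t θ - gF θ‖ ≤ ξ₁ + ξ₂ * ‖θ - θstar‖)
    (η : ℝ) (hη : η = L / (2 * M ^ 2))
    (θseq : ℕ → EuclideanSpace ℝ (Fin d))
    (hmem : ∀ t : ℕ, θseq t ∈ Θ)
    (hiter : ∀ t : ℕ, 1 ≤ t → θseq t = θseq (t - 1) - η • G t (θseq (t - 1)))
    (ρ : ℝ)
    (hρdef : ρ = 1 - Real.sqrt (1 - L ^ 2 / (4 * M ^ 2)) - ξ₂ * L / (2 * M ^ 2))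
    (hρpos : 0 < ρ) :
    ∀ t : ℕ, 1 ≤ t →
      ‖θseq t - θstar‖ ≤ (1 - ρ) ^ t * ‖θseq 0 - θstar‖ + η * ξ₁ / ρ :=
  approximate_gradient_descent_convergence_general d Θ F gF L M hL hM hstrong hlip θstar hθstar
    hgrad0 ξ₁ ξ₂ hξ₁ hξ₂ G hdev η hη θseq hmem hiter ρ hρdef hρpos
end

section
/- Let G₁ and G₂ be independent standard Gaussian real random variables, let γ, η ≥ 0 with τ² := γ + η > 0. Then for every λ with λ² ≤ 1/(64τ²): E[exp(λ(√γ (G₁² − 1) + √η G₁G₂))] ≤ exp(4λ²τ²). -/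
/-! With `c = λ√γ` and `d = λ√η`, integrating out `G₂` first with the Gaussian mgf gives
`E[exp(c(G₁² - 1) + d G₁G₂)] = e^{-c} E[exp((c + d²/2) G₁²)] = e^{-c} (1 - 2c - d²)^{-1/2}`.
After squaring, the bound `exp (4(c² + d²))` follows from `1 + x ≤ eˣ` and the polynomial
inequality `(1 + 2c + 8(c² + d²))(1 - 2c - d²) ≥ 1`, valid as long as `c² + d² ≤ 1/64`. -/

open MeasureTheory ProbabilityTheory Real
open scoped NNReal ENNReal

lemma lintegral_exp_mul_gaussianReal (μ : ℝ) (v : ℝ≥0) (t : ℝ) :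
    ∫⁻ x, ENNReal.ofReal (exp (t * x)) ∂gaussianReal μ v =
      ENNReal.ofReal (exp (μ * t + v * t ^ 2 / 2)) := by
  rw [← ofReal_integral_eq_lintegral_ofReal (integrable_exp_mul_gaussianReal t)
    (ae_of_all _ fun _ => (exp_pos _).le), ← congrFun mgf_id_gaussianReal t, mgf]
  rfl

lemma lintegral_exp_mul_sq_gaussianReal {a : ℝ} (ha : a < 1 / 2) :
    ∫⁻ x, ENNReal.ofReal (exp (a * x ^ 2)) ∂gaussianReal 0 1 =
      ENNReal.ofReal (√(1 - 2 * a))⁻¹ := by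
  have hb : 0 < 1 / 2 - a := by linarith
  have hdensity : ∀ x, gaussianPDFReal 0 1 x * exp (a * x ^ 2) =
      (√(2 * π))⁻¹ * exp (-(1 / 2 - a) * x ^ 2) := by
    intro x
    simp only [gaussianPDFReal, NNReal.coe_one, mul_one, sub_zero, mul_assoc, ← exp_add]
    congr 2
    ring
  rw [gaussianReal_of_var_ne_zero 0 one_ne_zero,
    lintegral_withDensity_eq_lintegral_mul _ (measurable_gaussianPDF 0 1) (by fun_prop)]
  simp only [Pi.mul_apply, gaussianPDF, ← ENNReal.ofReal_mul (gaussianPDFReal_nonneg 0 1 _),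
    hdensity]
  rw [← ofReal_integral_eq_lintegral_ofReal ((integrable_exp_neg_mul_sq hb).const_mul _)
    (ae_of_all _ fun _ => by positivity), integral_const_mul, integral_gaussian,
    ← sqrt_inv, ← sqrt_inv, ← sqrt_mul (by positivity)]
  congr 2
  field_simp

lemma ProbabilityTheory.IndepFun.lintegral_comp_eq_lintegral_prod {Ω α β : Type*}
    [MeasurableSpace Ω] [MeasurableSpace α] [MeasurableSpace β]
    {P : Measure Ω} [IsFiniteMeasure P] {X : Ω → α} {Y : Ω → β} (hX : AEMeasurable X P) (hY : AEMeasurable Y P)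
    (hXY : IndepFun X Y P) {f : α × β → ℝ≥0∞} (hf : Measurable f) :
    ∫⁻ ω, f (X ω, Y ω) ∂P = ∫⁻ p, f p ∂(P.map X).prod (P.map Y) := by
  rw [← (indepFun_iff_map_prod_eq_prod_map_map hX hY).1 hXY, lintegral_map' hf.aemeasurable
    (hX.prodMk hY)]

lemma lintegral_exp_chi_square_add_product_gaussianReal {c d : ℝ} (h : 2 * c + d ^ 2 < 1) :
    ∫⁻ p, ENNReal.ofReal (exp (c * (p.1 ^ 2 - 1) + d * (p.1 * p.2)))
        ∂(gaussianReal 0 1).prod (gaussianReal 0 1) =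
      ENNReal.ofReal (exp (-c) / √(1 - 2 * c - d ^ 2)) := by
  have hinner : ∀ x : ℝ, ∫⁻ y, ENNReal.ofReal (exp (c * (x ^ 2 - 1) + d * (x * y)))
      ∂gaussianReal 0 1 =
        ENNReal.ofReal (exp (-c)) * ENNReal.ofReal (exp ((c + d ^ 2 / 2) * x ^ 2)) := by
    intro x
    simp_rw [show ∀ y, c * (x ^ 2 - 1) + d * (x * y) = c * (x ^ 2 - 1) + d * x * y by
      intro y; ring, exp_add, ENNReal.ofReal_mul (exp_pos _).le]
    rw [lintegral_const_mul _ (by fun_prop), lintegral_exp_mul_gaussianReal,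
      ← ENNReal.ofReal_mul (exp_pos _).le, ← ENNReal.ofReal_mul (exp_pos _).le, ← exp_add,
      ← exp_add]
    congr 2
    push_cast
    ring
  rw [lintegral_prod _ (by fun_prop)]
  simp_rw [hinner]
  rw [lintegral_const_mul _ (by fun_prop), lintegral_exp_mul_sq_gaussianReal (by linarith),
    ← ENNReal.ofReal_mul (exp_pos _).le, div_eq_mul_inv]
  congr 4
  ring

lemma one_le_mul_of_sq_add_sq_le {c d : ℝ} (h : c ^ 2 + d ^ 2 ≤ 1 / 64) :
    1 ≤ (2 * c + 8 * (c ^ 2 + d ^ 2) + 1) * (1 - 2 * c - d ^ 2) := by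
  have hc₁ : -(1 / 8) ≤ c := by nlinarith [sq_nonneg d, sq_nonneg (c + 1 / 8)]
  have hc₂ : c ≤ 1 / 8 := by nlinarith [sq_nonneg d, sq_nonneg (c - 1 / 8)]
  have hs := add_nonneg (sq_nonneg c) (sq_nonneg d)
  nlinarith [mul_nonneg (sub_nonneg.2 hc₂) hs, mul_nonneg (neg_le_iff_add_nonneg.1 hc₁) hs,
    mul_nonneg (sub_nonneg.2 hc₂) (sq_nonneg d),
    mul_nonneg (neg_le_iff_add_nonneg.1 hc₁) (sq_nonneg d),
    mul_nonneg (sub_nonneg.2 h) (sq_nonneg d)]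

lemma exp_neg_div_sqrt_le_exp {c d : ℝ} (h : c ^ 2 + d ^ 2 ≤ 1 / 64) :
    exp (-c) / √(1 - 2 * c - d ^ 2) ≤ exp (4 * (c ^ 2 + d ^ 2)) := by
  set s := c ^ 2 + d ^ 2
  have hpos : 0 < 1 - 2 * c - d ^ 2 := by nlinarith
  have hkey : 1 ≤ exp (2 * c + 8 * s) * (1 - 2 * c - d ^ 2) :=
    (one_le_mul_of_sq_add_sq_le h).trans
      (mul_le_mul_of_nonneg_right (add_one_le_exp _) hpos.le)
  rw [div_le_iff₀ (sqrt_pos.2 hpos), ← sqrt_sq (exp_pos (4 * s)).le, ← sqrt_mul (sq_nonneg _),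
    le_sqrt (exp_pos _).le (mul_nonneg (sq_nonneg _) hpos.le), ← exp_nat_mul, ← exp_nat_mul]
  calc exp (2 * -c) ≤ exp (2 * -c) * (exp (2 * c + 8 * s) * (1 - 2 * c - d ^ 2)) :=
        le_mul_of_one_le_right (exp_pos _).le hkey
    _ = exp (2 * (4 * s)) * (1 - 2 * c - d ^ 2) := by
        rw [← mul_assoc, ← exp_add]; ring_nf

theorem mgf_chi_square_plus_product_bound_general
    {Ω : Type*} [MeasurableSpace Ω] (P : Measure Ω) [IsProbabilityMeasure P]
    (G₁ G₂ : Ω → ℝ) (hG₁meas : Measurable G₁) (hG₂meas : Measurable G₂)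
    (hG₁ : Measure.map G₁ P = gaussianReal 0 1)
    (hG₂ : Measure.map G₂ P = gaussianReal 0 1)
    (hindep : IndepFun G₁ G₂ P)
    (γ η τ : ℝ) (hγ : 0 ≤ γ) (hη : 0 ≤ η)
    (hτ : τ ^ 2 = γ + η) :
    ∀ l : ℝ, l ^ 2 ≤ 1 / (64 * τ ^ 2) →
      ∫ ω, Real.exp (l * (Real.sqrt γ * (G₁ ω ^ 2 - 1) + Real.sqrt η * G₁ ω * G₂ ω)) ∂P
        ≤ Real.exp (4 * l ^ 2 * τ ^ 2) := by
  intro l hl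
  set c := l * √γ
  set d := l * √η
  have hcd : c ^ 2 + d ^ 2 = l ^ 2 * τ ^ 2 := by
    rw [mul_pow, mul_pow, sq_sqrt hγ, sq_sqrt hη, hτ]
    ring
  have hsmall : c ^ 2 + d ^ 2 ≤ 1 / 64 := by
    rcases eq_or_ne τ 0 with rfl | hτ₀
    · simp [hcd]
    · rwa [hcd, ← le_div_iff₀ (by positivity), div_div]
  have hexp : ∀ ω, l * (√γ * (G₁ ω ^ 2 - 1) + √η * G₁ ω * G₂ ω) =
      c * (G₁ ω ^ 2 - 1) + d * (G₁ ω * G₂ ω) := fun ω => by ring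
  simp only [hexp]
  rw [integral_eq_lintegral_of_nonneg_ae (ae_of_all _ fun _ => (exp_pos _).le) (by fun_prop),
    hindep.lintegral_comp_eq_lintegral_prod hG₁meas.aemeasurable hG₂meas.aemeasurable
      (f := fun p => ENNReal.ofReal (exp (c * (p.1 ^ 2 - 1) + d * (p.1 * p.2)))) (by fun_prop),
    hG₁, hG₂, lintegral_exp_chi_square_add_product_gaussianReal (by nlinarith),
    ENNReal.toReal_ofReal (by positivity), mul_assoc, ← hcd]
  exact exp_neg_div_sqrt_le_exp hsmall

/-- The moment generating function bound used in the verification of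
Assumption 3 for linear regression: for independent standard Gaussians
`G₁, G₂`, and `γ, η ≥ 0` with `τ² = γ + η > 0`, for every `λ² ≤ 1/(64τ²)`,
`E[exp(λ(√γ(G₁² - 1) + √η G₁G₂))] ≤ exp(4λ²τ²)`. -/
theorem mgf_chi_square_plus_product_bound
    {Ω : Type*} [MeasurableSpace Ω] (P : Measure Ω) [IsProbabilityMeasure P]
    (G₁ G₂ : Ω → ℝ) (hG₁meas : Measurable G₁) (hG₂meas : Measurable G₂)
    (hG₁ : Measure.map G₁ P = gaussianReal 0 1)
    (hG₂ : Measure.map G₂ P = gaussianReal 0 1)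
    (hindep : IndepFun G₁ G₂ P)
    (γ η τ : ℝ) (hγ : 0 ≤ γ) (hη : 0 ≤ η)
    (hτ : τ ^ 2 = γ + η) (hτpos : 0 < τ) :
    ∀ l : ℝ, l ^ 2 ≤ 1 / (64 * τ ^ 2) →
      ∫ ω, Real.exp (l * (Real.sqrt γ * (G₁ ω ^ 2 - 1) + Real.sqrt η * G₁ ω * G₂ ω)) ∂P
        ≤ Real.exp (4 * l ^ 2 * τ ^ 2) :=
  mgf_chi_square_plus_product_bound_general P G₁ G₂ hG₁meas hG₂meas hG₁ hG₂ hindep γ η τ hγ hη hτ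
end
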